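/- arXiv:0711.3986 — 4 statements merged into one kernel-verified Lean document; each statement's English description precedes it below -/
import Mathlib

section
/- Let E, E', F, F' be finite-dimensional real normed vector spaces, r ∈ ℕ, x ∈ E, and let γ, δ : E → F be smooth (C^∞) maps such that iteratedFDeriv ℝ k γ x = iteratedFDeriv ℝ k δ x for all k ≤ r (in particular γ(x) = δ(x)). Then for every smooth map φ : E' → E with φ(x') = x and every smooth map ψ : F → F', the compositions satisfy iteratedFDeriv ℝ k (ψ ∘ γ ∘ φ) x' = iteratedFDeriv ℝ k (ψ ∘ δ ∘ φ) x' for all k ≤ r. (This expresses that the relation 'two local sections have the same partial derivatives up to order r at a point' is independent of the adapted charts used to express it, so r-jets of sections of a fiber bundle are well defined.) -/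
open Function

universe u

section helpers
variable {E F G : Type*} [NormedAddCommGroup E] [NormedSpace ℝ E]
  [NormedAddCommGroup F] [NormedSpace ℝ F] [NormedAddCommGroup G] [NormedSpace ℝ G]

lemma jet_val {f g : E → F} {x : E} (h : iteratedFDeriv ℝ 0 f x = iteratedFDeriv ℝ 0 g x) :
    f x = g x := by
  have := congrFun (congrArg DFunLike.coe h) 0
  simpa [iteratedFDeriv_zero_apply] using this

lemma jet_val' {f g : E → F} {x : E} (h : f x = g x) :
    iteratedFDeriv ℝ 0 f x = iteratedFDeriv ℝ 0 g x := by
  ext m; simp [iteratedFDeriv_zero_apply, h]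

lemma jet_fderiv {f g : E → F} {x : E} {k : ℕ}
    (h : iteratedFDeriv ℝ (k+1) f x = iteratedFDeriv ℝ (k+1) g x) :
    iteratedFDeriv ℝ k (fderiv ℝ f) x = iteratedFDeriv ℝ k (fderiv ℝ g) x := by
  rw [iteratedFDeriv_succ_eq_comp_right, iteratedFDeriv_succ_eq_comp_right] at h
  simp only [Function.comp_apply] at h
  exact (continuousMultilinearCurryRightEquiv' ℝ k E F).symm.injective h

lemma jet_pair_eq (u : E → F) (v : E → G) (hu : ContDiff ℝ (⊤ : ℕ∞) u) (hv : ContDiff ℝ (⊤ : ℕ∞) v)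
    (x : E) (k : ℕ) (m : Fin k → E) :
    iteratedFDeriv ℝ k (fun y => (u y, v y)) x m
      = (iteratedFDeriv ℝ k u x m, iteratedFDeriv ℝ k v x m) := by
  have e : (fun y => (u y, v y))
      = (ContinuousLinearMap.inl ℝ F G) ∘ u + (ContinuousLinearMap.inr ℝ F G) ∘ v := by
    funext y; simp
  rw [e, iteratedFDeriv_add_apply
      (((ContinuousLinearMap.inl ℝ F G).contDiff.comp hu).of_le (by exact_mod_cast le_top)).contDiffAt
      (((ContinuousLinearMap.inr ℝ F G).contDiff.comp hv).of_le (by exact_mod_cast le_top)).contDiffAt,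
    (ContinuousLinearMap.inl ℝ F G).iteratedFDeriv_comp_left hu.contDiffAt (by exact_mod_cast le_top),
    (ContinuousLinearMap.inr ℝ F G).iteratedFDeriv_comp_left hv.contDiffAt (by exact_mod_cast le_top)]
  simp

lemma jet_prod {u u' : E → F} {v v' : E → G} {x : E} {k : ℕ}
    (hu : ContDiff ℝ (⊤ : ℕ∞) u) (hu' : ContDiff ℝ (⊤ : ℕ∞) u') (hv : ContDiff ℝ (⊤ : ℕ∞) v) (hv' : ContDiff ℝ (⊤ : ℕ∞) v')
    (h1 : iteratedFDeriv ℝ k u x = iteratedFDeriv ℝ k u' x)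
    (h2 : iteratedFDeriv ℝ k v x = iteratedFDeriv ℝ k v' x) :
    iteratedFDeriv ℝ k (fun y => (u y, v y)) x
      = iteratedFDeriv ℝ k (fun y => (u' y, v' y)) x := by
  refine ContinuousMultilinearMap.ext fun m => ?_
  rw [jet_pair_eq u v hu hv, jet_pair_eq u' v' hu' hv', h1, h2]

end helpers

lemma jet_post : ∀ (r : ℕ) {E F F' : Type u} [NormedAddCommGroup E] [NormedSpace ℝ E]
    [NormedAddCommGroup F] [NormedSpace ℝ F] [NormedAddCommGroup F'] [NormedSpace ℝ F']
    (x : E) (f g : E → F), ContDiff ℝ (⊤ : ℕ∞) f → ContDiff ℝ (⊤ : ℕ∞) g →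
    (∀ k, k ≤ r → iteratedFDeriv ℝ k f x = iteratedFDeriv ℝ k g x) →
    ∀ (ψ : F → F'), ContDiff ℝ (⊤ : ℕ∞) ψ →
    ∀ k, k ≤ r → iteratedFDeriv ℝ k (ψ ∘ f) x = iteratedFDeriv ℝ k (ψ ∘ g) x := by
  intro r
  induction r with
  | zero =>
    intro E F F' _ _ _ _ _ _ x f g hf hg h ψ hψ k hk
    obtain rfl : k = 0 := Nat.le_zero.mp hk
    exact jet_val' (by simp [Function.comp_apply, jet_val (h 0 le_rfl)])
  | succ r IH =>
    intro E F F' _ _ _ _ _ _ x f g hf hg h ψ hψ k hk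
    match k, hk with
    | 0, _ => exact jet_val' (by simp [Function.comp_apply, jet_val (h 0 (by omega))])
    | (m+1), hk =>
      have hm : m ≤ r := by omega
      rw [iteratedFDeriv_succ_eq_comp_right, iteratedFDeriv_succ_eq_comp_right]
      simp only [Function.comp_apply]
      congr 1
      have hψ' : ContDiff ℝ (⊤ : ℕ∞) (fderiv ℝ ψ) := hψ.fderiv_right (by simp)
      have hfd : (fun y => fderiv ℝ (ψ ∘ f) y)
          = (fun p : (F →L[ℝ] F') × (E →L[ℝ] F) => p.1.comp p.2)
              ∘ (fun y => (fderiv ℝ ψ (f y), fderiv ℝ f y)) := by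
        funext y
        exact fderiv_comp y (hψ.differentiable (by simp) _)
          (hf.differentiable (by simp) y)
      have hgd : (fun y => fderiv ℝ (ψ ∘ g) y)
          = (fun p : (F →L[ℝ] F') × (E →L[ℝ] F) => p.1.comp p.2)
              ∘ (fun y => (fderiv ℝ ψ (g y), fderiv ℝ g y)) := by
        funext y
        exact fderiv_comp y (hψ.differentiable (by simp) _)
          (hg.differentiable (by simp) y)
      rw [hfd, hgd]
      have hpf : ContDiff ℝ (⊤ : ℕ∞) (fun y => (fderiv ℝ ψ (f y), fderiv ℝ f y)) :=
        (hψ'.comp hf).prodMk (hf.fderiv_right (by simp))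
      have hpg : ContDiff ℝ (⊤ : ℕ∞) (fun y => (fderiv ℝ ψ (g y), fderiv ℝ g y)) :=
        (hψ'.comp hg).prodMk (hg.fderiv_right (by simp))
      have hpair : ∀ k, k ≤ r →
          iteratedFDeriv ℝ k (fun y => (fderiv ℝ ψ (f y), fderiv ℝ f y)) x
            = iteratedFDeriv ℝ k (fun y => (fderiv ℝ ψ (g y), fderiv ℝ g y)) x := by
        intro k hk
        refine jet_prod (hψ'.comp hf) (hψ'.comp hg)
          (hf.fderiv_right (by simp)) (hg.fderiv_right (by simp)) ?_ ?_
        · exact IH x f g hf hg (fun j hj => h j (by omega)) (fderiv ℝ ψ) hψ' k hk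
        · exact jet_fderiv (h (k+1) (by omega))
      exact IH x _ _ hpf hpg hpair _ (isBoundedBilinearMap_comp.contDiff) m hm

lemma jet_pre : ∀ (r : ℕ) {E E' F : Type u} [NormedAddCommGroup E] [NormedSpace ℝ E]
    [NormedAddCommGroup E'] [NormedSpace ℝ E'] [NormedAddCommGroup F] [NormedSpace ℝ F]
    (x : E) (f g : E → F), ContDiff ℝ (⊤ : ℕ∞) f → ContDiff ℝ (⊤ : ℕ∞) g →
    (∀ k, k ≤ r → iteratedFDeriv ℝ k f x = iteratedFDeriv ℝ k g x) →
    ∀ (φ : E' → E), ContDiff ℝ (⊤ : ℕ∞) φ → ∀ (x' : E'), φ x' = x →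
    ∀ k, k ≤ r → iteratedFDeriv ℝ k (f ∘ φ) x' = iteratedFDeriv ℝ k (g ∘ φ) x' := by
  intro r
  induction r with
  | zero =>
    intro E E' F _ _ _ _ _ _ x f g hf hg h φ hφ x' hx k hk
    obtain rfl : k = 0 := Nat.le_zero.mp hk
    exact jet_val' (by simp [Function.comp_apply, hx, jet_val (h 0 le_rfl)])
  | succ r IH =>
    intro E E' F _ _ _ _ _ _ x f g hf hg h φ hφ x' hx k hk
    match k, hk with
    | 0, _ => exact jet_val' (by simp [Function.comp_apply, hx, jet_val (h 0 (by omega))])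
    | (m+1), hk =>
      have hm : m ≤ r := by omega
      rw [iteratedFDeriv_succ_eq_comp_right, iteratedFDeriv_succ_eq_comp_right]
      simp only [Function.comp_apply]
      congr 1
      have hfd : (fun y => fderiv ℝ (f ∘ φ) y)
          = (fun p : (E →L[ℝ] F) × (E' →L[ℝ] E) => p.1.comp p.2)
              ∘ (fun y => (fderiv ℝ f (φ y), fderiv ℝ φ y)) := by
        funext y
        exact fderiv_comp y (hf.differentiable (by simp) _)
          (hφ.differentiable (by simp) y)
      have hgd : (fun y => fderiv ℝ (g ∘ φ) y)
          = (fun p : (E →L[ℝ] F) × (E' →L[ℝ] E) => p.1.comp p.2)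
              ∘ (fun y => (fderiv ℝ g (φ y), fderiv ℝ φ y)) := by
        funext y
        exact fderiv_comp y (hg.differentiable (by simp) _)
          (hφ.differentiable (by simp) y)
      rw [hfd, hgd]
      have hpf : ContDiff ℝ (⊤ : ℕ∞) (fun y => (fderiv ℝ f (φ y), fderiv ℝ φ y)) :=
        ((hf.fderiv_right (by simp)).comp hφ).prodMk (hφ.fderiv_right (by simp))
      have hpg : ContDiff ℝ (⊤ : ℕ∞) (fun y => (fderiv ℝ g (φ y), fderiv ℝ φ y)) :=
        ((hg.fderiv_right (by simp)).comp hφ).prodMk (hφ.fderiv_right (by simp))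
      have hpair : ∀ k, k ≤ r →
          iteratedFDeriv ℝ k (fun y => (fderiv ℝ f (φ y), fderiv ℝ φ y)) x'
            = iteratedFDeriv ℝ k (fun y => (fderiv ℝ g (φ y), fderiv ℝ φ y)) x' := by
        intro k hk
        refine jet_prod ((hf.fderiv_right (by simp)).comp hφ) ((hg.fderiv_right (by simp)).comp hφ)
          (hφ.fderiv_right (by simp)) (hφ.fderiv_right (by simp)) ?_ rfl
        exact IH x (fderiv ℝ f) (fderiv ℝ g) (hf.fderiv_right (by simp)) (hg.fderiv_right (by simp))
          (fun j hj => jet_fderiv (h (j+1) (by omega))) φ hφ x' hx k hk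
      exact jet_post r x' _ _ hpf hpg hpair _ (isBoundedBilinearMap_comp.contDiff) m hm

section conj
variable {E₀ E F F₀ : Type*} [NormedAddCommGroup E₀] [NormedSpace ℝ E₀]
  [NormedAddCommGroup E] [NormedSpace ℝ E]
  [NormedAddCommGroup F] [NormedSpace ℝ F] [NormedAddCommGroup F₀] [NormedSpace ℝ F₀]

lemma jet_conj_key (eE : E₀ ≃L[ℝ] E) (eF : F ≃L[ℝ] F₀) (f : E → F) (hf : ContDiff ℝ (⊤ : ℕ∞) f)
    (x₀ : E₀) (k : ℕ) (m : Fin k → E₀) :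
    iteratedFDeriv ℝ k (⇑eF ∘ f ∘ ⇑eE) x₀ m
      = eF (iteratedFDeriv ℝ k f (eE x₀) (fun i => eE (m i))) := by
  have h1 : (⇑eF ∘ f ∘ ⇑eE) = ⇑(eF : F →L[ℝ] F₀) ∘ (f ∘ ⇑(eE : E₀ →L[ℝ] E)) := rfl
  rw [h1, (eF : F →L[ℝ] F₀).iteratedFDeriv_comp_left
      (hf.comp (eE : E₀ →L[ℝ] E).contDiff).contDiffAt (by exact_mod_cast le_top),
    (eE : E₀ →L[ℝ] E).iteratedFDeriv_comp_right hf x₀ (by exact_mod_cast le_top)]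
  simp

lemma jet_conj (eE : E₀ ≃L[ℝ] E) (eF : F ≃L[ℝ] F₀) {f g : E → F}
    (hf : ContDiff ℝ (⊤ : ℕ∞) f) (hg : ContDiff ℝ (⊤ : ℕ∞) g) (x₀ : E₀) (k : ℕ)
    (h : iteratedFDeriv ℝ k (⇑eF ∘ f ∘ ⇑eE) x₀ = iteratedFDeriv ℝ k (⇑eF ∘ g ∘ ⇑eE) x₀) :
    iteratedFDeriv ℝ k f (eE x₀) = iteratedFDeriv ℝ k g (eE x₀) := by
  refine ContinuousMultilinearMap.ext fun m => ?_
  have h2 := congrFun (congrArg DFunLike.coe h) (fun i => eE.symm (m i))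
  rw [jet_conj_key eE eF f hf, jet_conj_key eE eF g hg] at h2
  simp only [ContinuousLinearEquiv.apply_symm_apply] at h2
  exact eF.injective h2

lemma jet_conj' (eE : E₀ ≃L[ℝ] E) (eF : F ≃L[ℝ] F₀) {f g : E → F}
    (hf : ContDiff ℝ (⊤ : ℕ∞) f) (hg : ContDiff ℝ (⊤ : ℕ∞) g) (x₀ : E₀) (k : ℕ)
    (h : iteratedFDeriv ℝ k f (eE x₀) = iteratedFDeriv ℝ k g (eE x₀)) :
    iteratedFDeriv ℝ k (⇑eF ∘ f ∘ ⇑eE) x₀ = iteratedFDeriv ℝ k (⇑eF ∘ g ∘ ⇑eE) x₀ := by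
  refine ContinuousMultilinearMap.ext fun m => ?_
  rw [jet_conj_key eE eF f hf, jet_conj_key eE eF g hg, h]

end conj

universe u1 u2 u3 u4

theorem jet_main {E : Type u1} {E' : Type u2} {F : Type u3} {F' : Type u4}
    [NormedAddCommGroup E] [NormedSpace ℝ E]
    [NormedAddCommGroup E'] [NormedSpace ℝ E']
    [NormedAddCommGroup F] [NormedSpace ℝ F]
    [NormedAddCommGroup F'] [NormedSpace ℝ F']
    (r : ℕ) (x : E) (γ δ : E → F)
    (hγ : ContDiff ℝ (⊤ : ℕ∞) γ) (hδ : ContDiff ℝ (⊤ : ℕ∞) δ)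
    (h : ∀ k : ℕ, k ≤ r → iteratedFDeriv ℝ k γ x = iteratedFDeriv ℝ k δ x)
    (φ : E' → E) (hφ : ContDiff ℝ (⊤ : ℕ∞) φ) (x' : E') (hx : φ x' = x)
    (ψ : F → F') (hψ : ContDiff ℝ (⊤ : ℕ∞) ψ) :
    ∀ k : ℕ, k ≤ r →
      iteratedFDeriv ℝ k (ψ ∘ γ ∘ φ) x' = iteratedFDeriv ℝ k (ψ ∘ δ ∘ φ) x' := by
  intro k hk
  let eE : ULift.{max u1 u2 u3 u4} E ≃L[ℝ] E := ContinuousLinearEquiv.ulift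
  let eE' : ULift.{max u1 u2 u3 u4} E' ≃L[ℝ] E' := ContinuousLinearEquiv.ulift
  let eF : ULift.{max u1 u2 u3 u4} F ≃L[ℝ] F := ContinuousLinearEquiv.ulift
  let eF' : ULift.{max u1 u2 u3 u4} F' ≃L[ℝ] F' := ContinuousLinearEquiv.ulift
  set γ' := ⇑eF.symm ∘ γ ∘ ⇑eE with hγ'def
  set δ' := ⇑eF.symm ∘ δ ∘ ⇑eE with hδ'def
  set φ' := ⇑eE.symm ∘ φ ∘ ⇑eE' with hφ'def
  set ψ' := ⇑eF'.symm ∘ ψ ∘ ⇑eF with hψ'def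
  have hγ'c : ContDiff ℝ (⊤ : ℕ∞) γ' := eF.symm.contDiff.comp (hγ.comp eE.contDiff)
  have hδ'c : ContDiff ℝ (⊤ : ℕ∞) δ' := eF.symm.contDiff.comp (hδ.comp eE.contDiff)
  have hφ'c : ContDiff ℝ (⊤ : ℕ∞) φ' := eE.symm.contDiff.comp (hφ.comp eE'.contDiff)
  have hψ'c : ContDiff ℝ (⊤ : ℕ∞) ψ' := eF'.symm.contDiff.comp (hψ.comp eF.contDiff)
  set x₀ := eE.symm x with hx₀def
  set x₀' := eE'.symm x' with hx₀'def
  have hEx : eE x₀ = x := eE.apply_symm_apply x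
  have hEx' : eE' x₀' = x' := eE'.apply_symm_apply x'
  -- lifted hypothesis
  have h' : ∀ j, j ≤ r → iteratedFDeriv ℝ j γ' x₀ = iteratedFDeriv ℝ j δ' x₀ := by
    intro j hj
    exact jet_conj' eE eF.symm hγ hδ x₀ j (by rw [hEx]; exact h j hj)
  -- postcompose
  have hpost := jet_post r x₀ γ' δ' hγ'c hδ'c h' ψ' hψ'c
  -- precompose
  have hφ'x : φ' x₀' = x₀ := by
    simp [hφ'def, hx₀def, hx₀'def, hEx', hx]
  have hpre := jet_pre r x₀ (ψ' ∘ γ') (ψ' ∘ δ') (hψ'c.comp hγ'c) (hψ'c.comp hδ'c)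
    hpost φ' hφ'c x₀' hφ'x
  -- transport back
  have hlift : iteratedFDeriv ℝ k (⇑eF'.symm ∘ (ψ ∘ γ ∘ φ) ∘ ⇑eE') x₀'
      = iteratedFDeriv ℝ k (⇑eF'.symm ∘ (ψ ∘ δ ∘ φ) ∘ ⇑eE') x₀' := by
    have e1 : ⇑eF'.symm ∘ (ψ ∘ γ ∘ φ) ∘ ⇑eE' = (ψ' ∘ γ') ∘ φ' := by
      funext y
      simp [hψ'def, hγ'def, hφ'def, Function.comp_apply]
    have e2 : ⇑eF'.symm ∘ (ψ ∘ δ ∘ φ) ∘ ⇑eE' = (ψ' ∘ δ') ∘ φ' := by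
      funext y
      simp [hψ'def, hδ'def, hφ'def, Function.comp_apply]
    rw [e1, e2]
    exact hpre k hk
  have := jet_conj eE' eF'.symm
    (hψ.comp (hγ.comp hφ)) (hψ.comp (hδ.comp hφ)) x₀' k hlift
  rwa [hEx'] at this





/-!  STATEMENT 0.
Chart-independence of `r`-jet equivalence: if two smooth maps `γ δ : E → F` have the same
iterated Fréchet derivatives at `x` up to order `r`, then so do the compositions
`ψ ∘ γ ∘ φ` and `ψ ∘ δ ∘ φ` at `x'`, for any smooth `φ : E' → E` with `φ x' = x` and any
smooth `ψ : F → F'`. -/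

theorem jet_equivalence_chart_independent
    {E E' F F' : Type*}
    [NormedAddCommGroup E] [NormedSpace ℝ E] [FiniteDimensional ℝ E]
    [NormedAddCommGroup E'] [NormedSpace ℝ E'] [FiniteDimensional ℝ E']
    [NormedAddCommGroup F] [NormedSpace ℝ F] [FiniteDimensional ℝ F]
    [NormedAddCommGroup F'] [NormedSpace ℝ F'] [FiniteDimensional ℝ F']
    (r : ℕ) (x : E) (γ δ : E → F)
    (hγ : ContDiff ℝ (⊤ : ℕ∞) γ) (hδ : ContDiff ℝ (⊤ : ℕ∞) δ)
    (h : ∀ k : ℕ, k ≤ r → iteratedFDeriv ℝ k γ x = iteratedFDeriv ℝ k δ x)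
    (φ : E' → E) (hφ : ContDiff ℝ (⊤ : ℕ∞) φ) (x' : E') (hx : φ x' = x)
    (ψ : F → F') (hψ : ContDiff ℝ (⊤ : ℕ∞) ψ) :
    ∀ k : ℕ, k ≤ r →
      iteratedFDeriv ℝ k (ψ ∘ γ ∘ φ) x' = iteratedFDeriv ℝ k (ψ ∘ δ ∘ φ) x' :=
  jet_main r x γ δ hγ hδ h φ hφ x' hx ψ hψ
end

section
/- Spinor decomposition into symmetric tensors: let t_{a1...an} be a rank-n tensor with indices a_i ∈ {1,2} and values in ℂ. Then t can be written as t_{a1...an} = Σ_P (ε_{I1}···ε_{Ik} t^P_{I0})_{a1...an}, where the sum runs over all partitions P = {I0, I1, ..., Ik} of the index positions {1,...,n} with |I1| = ··· = |Ik| = 2, ε_{Ij} denotes the antisymmetric symbol ε placed at the pair of positions Ij, and each t^P_{I0} is a completely symmetric tensor of rank |I0| placed at the positions I0. -/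
/-!  STATEMENT 16.
Spinor decomposition into symmetric tensors: every rank-`n` spinor tensor (indices in
`{1,2}`, values in `ℂ`) is a sum over pair-partitions of the index positions of
`ε`-factors times completely symmetric tensors. -/

noncomputable section

open scoped BigOperators

namespace SpinorTensors

/-- A rank-`n` spinor tensor. -/
abbrev SpinTensor (n : ℕ) : Type := (Fin n → Fin 2) → ℂ

/-- The antisymmetric symbol `ε` with `ε_{12} = 1`. -/
def ε (a b : Fin 2) : ℂ := if a = 0 ∧ b = 1 then 1 else if a = 1 ∧ b = 0 then -1 else 0

/-- A splitting of the `n` index positions into `k` (ordered) pairs and `n - 2k` remaining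
positions; this encodes a partition `{I₀, I₁, ..., I_k}` with `|I₁| = ⋯ = |I_k| = 2`. -/
abbrev PairSplit (n k : ℕ) : Type := (Fin k ⊕ (Fin k ⊕ Fin (n - 2 * k))) ≃ Fin n

/-- `ε_{I₁}···ε_{I_k} s_{I₀}` : place `ε`-factors at the pairs of the splitting and the
tensor `s` at the remaining positions. -/
def place {n : ℕ} (k : ℕ) (e : PairSplit n k) (s : SpinTensor (n - 2 * k)) :
    SpinTensor n :=
  fun idx =>
    (∏ i : Fin k, ε (idx (e (Sum.inl i))) (idx (e (Sum.inr (Sum.inl i))))) *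
      s fun j => idx (e (Sum.inr (Sum.inr j)))

/-- A spinor tensor is completely symmetric. -/
def IsSymmetric {n : ℕ} (t : SpinTensor n) : Prop :=
  ∀ (g : Equiv.Perm (Fin n)) (idx : Fin n → Fin 2), t (idx ∘ g) = t idx

end SpinorTensors

/-! Symmetrization `t ↦ (1/n!) ∑_σ t ∘ σ` produces a symmetric tensor, and `t - t ∘ σ` is a
sum of differences `t' - t' ∘ (i j)` over transpositions. Such a difference is antisymmetric
in the positions `i, j`, and `ε` spans the antisymmetric rank-2 tensors over `{1,2}`: it
vanishes when `a_i = a_j` and is determined by its value at `(a_i, a_j) = (1, 2)`, so it equals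
`ε_{a_i a_j} u` with `u` of rank `n - 2`. Hence `t = Sym t + ∑ ε_{pair} u_{pair}`, and
decomposing each `u` in turn, the new pair being appended to the pairs already placed,
terminates because the rank drops by two at each step. -/

namespace SpinorTensors

open Finset Equiv

variable {n : ℕ}

def permute (σ : Perm (Fin n)) : SpinTensor n →ₗ[ℂ] SpinTensor n :=
  LinearMap.funLeft ℂ ℂ fun idx => idx ∘ σ

@[simp] lemma permute_apply (σ : Perm (Fin n)) (t : SpinTensor n) (idx : Fin n → Fin 2) :
    permute σ t idx = t (idx ∘ σ) := rfl

lemma permute_permute (g σ : Perm (Fin n)) (t : SpinTensor n) :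
    permute g (permute σ t) = permute (g * σ) t := rfl

lemma permute_one (t : SpinTensor n) : permute 1 t = t := rfl

lemma isSymmetric_iff_permute_eq {t : SpinTensor n} :
    IsSymmetric t ↔ ∀ g, permute g t = t := by
  simp only [IsSymmetric, funext_iff, permute_apply]

lemma isSymmetric_zero : IsSymmetric (0 : SpinTensor n) := fun _ _ => rfl

def symmetrize (t : SpinTensor n) : SpinTensor n :=
  (n.factorial : ℂ)⁻¹ • ∑ σ : Perm (Fin n), permute σ t

lemma isSymmetric_symmetrize (t : SpinTensor n) : IsSymmetric (symmetrize t) := by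
  refine isSymmetric_iff_permute_eq.mpr fun g => ?_
  simp only [symmetrize, map_smul, map_sum, permute_permute]
  congr 1
  exact Fintype.sum_equiv (Equiv.mulLeft g) _ _ fun _ => rfl

lemma sub_symmetrize_eq (t : SpinTensor n) :
    t - symmetrize t = (n.factorial : ℂ)⁻¹ • ∑ σ : Perm (Fin n), (t - permute σ t) := by
  have hfac : (n.factorial : ℂ) ≠ 0 := by exact_mod_cast n.factorial_ne_zero
  rw [sum_sub_distrib, smul_sub, sum_const, card_univ, Fintype.card_perm, Fintype.card_fin,
    ← Nat.cast_smul_eq_nsmul ℂ, smul_smul, inv_mul_cancel₀ hfac, one_smul, symmetrize]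

lemma PairSplit.two_mul_le {k : ℕ} (e : PairSplit n k) : 2 * k ≤ n := by
  have := Fintype.card_congr e
  simp only [Fintype.card_sum, Fintype.card_fin] at this
  omega

def placeₗ (k : ℕ) (e : PairSplit n k) : SpinTensor (n - 2 * k) →ₗ[ℂ] SpinTensor n where
  toFun := place k e
  map_add' s s' := by funext idx; simp only [place, Pi.add_apply, mul_add]
  map_smul' c s := by
    funext idx
    simp only [place, Pi.smul_apply, smul_eq_mul, RingHom.id_apply]
    ring

@[simp] lemma placeₗ_apply (k : ℕ) (e : PairSplit n k) (s : SpinTensor (n - 2 * k)) :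
    placeₗ k e s = place k e s := rfl

def PairSplit.fill (e : PairSplit n 1) (a b : Fin 2) (f : Fin (n - 2 * 1) → Fin 2) :
    Fin n → Fin 2 :=
  Sum.elim (fun _ => a) (Sum.elim (fun _ => b) f) ∘ e.symm

lemma PairSplit.fill_eq_self (e : PairSplit n 1) (idx : Fin n → Fin 2) :
    e.fill (idx (e (.inl 0))) (idx (e (.inr (.inl 0)))) (fun j => idx (e (.inr (.inr j)))) =
      idx := by
  funext p
  obtain ⟨x, rfl⟩ := e.surjective p
  rcases x with i | i | j <;> simp [fill, Fin.fin_one_eq_zero]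

lemma PairSplit.fill_comp_swap (e : PairSplit n 1) (a b : Fin 2) (f : Fin (n - 2 * 1) → Fin 2) :
    e.fill a b f ∘ swap (e (.inl 0)) (e (.inr (.inl 0))) = e.fill b a f := by
  funext p
  obtain ⟨x, rfl⟩ := e.surjective p
  rw [← symm_trans_swap_trans]
  rcases x with i | i | j <;> simp [fill, Fin.fin_one_eq_zero, swap_apply_of_ne_of_ne]

lemma eq_place_of_permute_swap_eq_neg (e : PairSplit n 1) {v : SpinTensor n}
    (hv : permute (swap (e (.inl 0)) (e (.inr (.inl 0)))) v = -v) :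
    v = place 1 e fun f => v (e.fill 0 1 f) := by
  funext idx
  conv_lhs => rw [← e.fill_eq_self idx]
  simp only [place, Fin.prod_univ_one]
  generalize idx (e (.inl 0)) = a, idx (e (.inr (.inl 0))) = b,
    (fun j => idx (e (.inr (.inr j)))) = r
  have hanti (a b : Fin 2) : v (e.fill a b r) = -v (e.fill b a r) := by
    rw [← e.fill_comp_swap b a]
    exact congrFun hv _
  fin_cases a <;> fin_cases b
  · simpa [ε, CharZero.eq_neg_self_iff] using hanti 0 0
  · simp [ε]
  · simpa [ε] using hanti 1 0
  · simpa [ε, CharZero.eq_neg_self_iff] using hanti 1 1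

lemma PairSplit.exists_pair_eq {i j : Fin n} (hij : i ≠ j) :
    ∃ e : PairSplit n 1, e (.inl 0) = i ∧ e (.inr (.inl 0)) = j := by
  have hn : 2 ≤ n := by
    by_contra! h
    interval_cases n
    exacts [i.elim0, hij (Subsingleton.elim i j)]
  obtain ⟨e₁⟩ : Nonempty (Fin 1 ⊕ (Fin 1 ⊕ Fin (n - 2 * 1)) ≃ Fin n) :=
    Fintype.card_eq.mp (by simp; omega)
  set a := e₁ (.inl 0)
  set b := e₁ (.inr (.inl 0))
  have hb : swap a i b ≠ i := by
    rw [Ne, swap_apply_eq_iff, swap_apply_right]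
    exact e₁.injective.ne (by simp)
  refine ⟨e₁.trans ((swap a i).trans (swap (swap a i b) j)), ?_, ?_⟩
  · simp [a, swap_apply_of_ne_of_ne hb.symm hij]
  · simp [b]

def pairSpan (n : ℕ) : Submodule ℂ (SpinTensor n) :=
  Submodule.span ℂ (Set.range fun p : PairSplit n 1 × SpinTensor (n - 2 * 1) => place 1 p.1 p.2)

lemma sub_permute_swap_mem_pairSpan {i j : Fin n} (hij : i ≠ j) (t : SpinTensor n) :
    t - permute (swap i j) t ∈ pairSpan n := by
  obtain ⟨e, rfl, rfl⟩ := PairSplit.exists_pair_eq hij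
  set v := t - permute (swap (e (.inl 0)) (e (.inr (.inl 0)))) t
  have hanti : permute (swap (e (.inl 0)) (e (.inr (.inl 0)))) v = -v := by
    rw [map_sub, permute_permute, swap_mul_self, permute_one, neg_sub]
  rw [eq_place_of_permute_swap_eq_neg e hanti]
  exact Submodule.subset_span ⟨(e, _), rfl⟩

lemma sub_permute_mem_pairSpan (σ : Perm (Fin n)) (t : SpinTensor n) :
    t - permute σ t ∈ pairSpan n := by
  induction σ using Perm.swap_induction_on with
  | one => simp [permute_one]
  | swap_mul σ i j hij ih =>
    rw [← permute_permute, ← sub_add_sub_cancel t (permute σ t)]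
    exact add_mem ih (sub_permute_swap_mem_pairSpan hij _)

lemma sub_symmetrize_mem_pairSpan (t : SpinTensor n) : t - symmetrize t ∈ pairSpan n := by
  rw [sub_symmetrize_eq]
  exact Submodule.smul_mem _ _ (Submodule.sum_mem _ fun σ _ => sub_permute_mem_pairSpan σ t)

def sumShuffle (K O M : Type*) : (K ⊕ O) ⊕ ((K ⊕ O) ⊕ M) ≃ K ⊕ (K ⊕ (O ⊕ (O ⊕ M))) where
  toFun
    | .inl (.inl k) => .inl k
    | .inl (.inr o) => .inr (.inr (.inl o))
    | .inr (.inl (.inl k)) => .inr (.inl k)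
    | .inr (.inl (.inr o)) => .inr (.inr (.inr (.inl o)))
    | .inr (.inr m) => .inr (.inr (.inr (.inr m)))
  invFun
    | .inl k => .inl (.inl k)
    | .inr (.inl k) => .inr (.inl (.inl k))
    | .inr (.inr (.inl o)) => .inl (.inr o)
    | .inr (.inr (.inr (.inl o))) => .inr (.inl (.inr o))
    | .inr (.inr (.inr (.inr m))) => .inr (.inr m)
  left_inv := by rintro ((k | o) | ((k | o) | m)) <;> rfl
  right_inv := by rintro (k | (k | (o | (o | m)))) <;> rfl

lemma sub_two_mul_succ (n k : ℕ) : n - 2 * (k + 1) = n - 2 * k - 2 * 1 := by omega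

def PairSplit.snoc {k : ℕ} (e : PairSplit n k) (e' : PairSplit (n - 2 * k) 1) :
    PairSplit n (k + 1) :=
  (sumCongr finSumFinEquiv.symm
      (sumCongr finSumFinEquiv.symm (finCongr (sub_two_mul_succ n k)))).trans
    ((sumShuffle _ _ _).trans ((sumCongr (.refl _) (sumCongr (.refl _) e')).trans e))

lemma place_snoc {k : ℕ} (e : PairSplit n k) (e' : PairSplit (n - 2 * k) 1)
    (u : SpinTensor (n - 2 * k - 2 * 1)) :
    place (k + 1) (e.snoc e') (fun idx => u (idx ∘ Fin.cast (sub_two_mul_succ n k).symm)) =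
      place k e (place 1 e' u) := by
  funext idx
  simp only [place, PairSplit.snoc, sumShuffle, trans_apply, sumCongr_apply, Sum.map_inl,
    Sum.map_inr, coe_fn_mk, coe_refl, id_eq, Fin.prod_univ_castSucc,
    finSumFinEquiv_symm_apply_castSucc, finSumFinEquiv_symm_last, Fin.last_zero, finCongr_apply,
    Function.comp_def, Fin.cast_eq_self]
  ring

def decomposables (n : ℕ) : Submodule ℂ (SpinTensor n) where
  carrier := {t | ∃ T : (k : ℕ) → PairSplit n k → SpinTensor (n - 2 * k),
    (∀ k e, IsSymmetric (T k e)) ∧ t = ∑ k ∈ range (n / 2 + 1), ∑ e, place k e (T k e)}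
  zero_mem' := ⟨0, fun _ _ => isSymmetric_zero, by
    simp only [Pi.zero_apply, ← placeₗ_apply, map_zero, sum_const_zero]⟩
  add_mem' := by
    rintro _ _ ⟨T, hT, rfl⟩ ⟨T', hT', rfl⟩
    refine ⟨T + T', fun k e g idx => ?_, ?_⟩
    · simp only [Pi.add_apply, hT k e g idx, hT' k e g idx]
    · simp only [Pi.add_apply, ← placeₗ_apply, map_add, sum_add_distrib]
  smul_mem' := by
    rintro c _ ⟨T, hT, rfl⟩
    refine ⟨c • T, fun k e g idx => ?_, ?_⟩
    · simp only [Pi.smul_apply, hT k e g idx]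
    · simp only [Pi.smul_apply, ← placeₗ_apply, map_smul, smul_sum]

lemma place_mem_decomposables_of_isSymmetric {k : ℕ} (e : PairSplit n k)
    {s : SpinTensor (n - 2 * k)} (hs : IsSymmetric s) : place k e s ∈ decomposables n := by
  classical
  let T := Pi.single (M := fun x : Σ k, PairSplit n k => SpinTensor (n - 2 * x.1)) ⟨k, e⟩ s
  have hT (x : Σ k, PairSplit n k) : IsSymmetric (T x) := by
    by_cases h : x = ⟨k, e⟩
    · subst h
      simpa [T] using hs
    · simpa [T, Pi.single_eq_of_ne h] using isSymmetric_zero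
  refine ⟨fun k e => T ⟨k, e⟩, fun k e => hT ⟨k, e⟩, ?_⟩
  have hk : k ∈ range (n / 2 + 1) := mem_range.mpr (by have := e.two_mul_le; omega)
  rw [sum_sigma', sum_eq_single_of_mem (⟨k, e⟩ : Σ k, PairSplit n k) (by simpa using hk)]
  · simp [T]
  · intro x _ hx
    simp [T, Pi.single_eq_of_ne hx, ← placeₗ_apply]

theorem place_mem_decomposables {k : ℕ} (e : PairSplit n k) (s : SpinTensor (n - 2 * k)) :
    place k e s ∈ decomposables n := by
  rw [← add_sub_cancel (symmetrize s) s, ← placeₗ_apply, map_add]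
  refine add_mem (place_mem_decomposables_of_isSymmetric e (isSymmetric_symmetrize s)) ?_
  have hspan : pairSpan (n - 2 * k) ≤ (decomposables n).comap (placeₗ k e) := by
    refine Submodule.span_le.mpr ?_
    rintro _ ⟨⟨e', u⟩, rfl⟩
    have := e'.two_mul_le
    rw [SetLike.mem_coe, Submodule.mem_comap, placeₗ_apply, ← place_snoc]
    exact place_mem_decomposables (e.snoc e') _
  exact hspan (sub_symmetrize_mem_pairSpan s)
termination_by n - 2 * k

def PairSplit.unpaired (n : ℕ) : PairSplit n 0 :=
  (emptySum _ _).trans ((emptySum _ _).trans (finCongr (by simp)))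

lemma place_unpaired (t : SpinTensor n) : place 0 (PairSplit.unpaired n) t = t := by
  funext idx
  simp [place, PairSplit.unpaired]

end SpinorTensors

open SpinorTensors in
theorem spinor_decomposition {n : ℕ} (t : SpinTensor n) :
    ∃ T : (k : ℕ) → (e : PairSplit n k) → SpinTensor (n - 2 * k),
      (∀ k (e : PairSplit n k), IsSymmetric (T k e)) ∧
      ∀ idx : Fin n → Fin 2,
        t idx = ∑ k ∈ Finset.range (n / 2 + 1), ∑ e : PairSplit n k,
          place k e (T k e) idx := by
  obtain ⟨T, hT, ht⟩ := place_mem_decomposables (PairSplit.unpaired n) t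
  rw [place_unpaired] at ht
  exact ⟨T, hT, fun idx => by simp only [ht, Finset.sum_apply]⟩
end
end

section
/- Orthogonality of trace strata: for 0 ≤ 2k ≤ n and 0 ≤ 2l ≤ n with k ≠ l, the subspaces T^n_k and T^n_l of rank-n Minkowski tensors are orthogonal with respect to the η-pairing: ⟨t, s⟩ = 0 for every t ∈ T^n_k and s ∈ T^n_l. -/
noncomputable section

open scoped BigOperators

namespace MinkTensors

/-- A real rank-`n` tensor on Minkowski space. -/
abbrev MinkTensor (n : ℕ) : Type := (Fin n → Fin 4) → ℝ

/-- The Minkowski metric `η = diag(1,-1,-1,-1)` (which coincides with its inverse). -/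
def η (μ ν : Fin 4) : ℝ := if μ = ν then (if μ = 0 then 1 else -1) else 0

/-- `Λ` is a Lorentz transformation: `Λᵀ η Λ = η`. -/
def IsLorentz (Λ : Matrix (Fin 4) (Fin 4) ℝ) : Prop :=
  ∀ μ ν, ∑ ρ : Fin 4, ∑ σ : Fin 4, Λ ρ μ * η ρ σ * Λ σ ν = η μ ν

/-- `Λ` belongs to the proper orthochronous Lorentz group `SO⁺(1,3)`. -/
def IsProperOrtho (Λ : Matrix (Fin 4) (Fin 4) ℝ) : Prop :=
  IsLorentz Λ ∧ Λ.det = 1 ∧ 1 ≤ Λ 0 0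

/-- The parity transformation `diag(1,-1,-1,-1)`. -/
def parityMat : Matrix (Fin 4) (Fin 4) ℝ := Matrix.of fun μ ν => η μ ν

/-- The action `t ↦ Λ^{ν₁}{}_{μ₁}···Λ^{ν_n}{}_{μ_n} t_{ν₁...ν_n}` of a matrix on rank-`n`
tensors. -/
def actT {n : ℕ} (Λ : Matrix (Fin 4) (Fin 4) ℝ) (t : MinkTensor n) : MinkTensor n :=
  fun idx => ∑ νs : Fin n → Fin 4, (∏ i, Λ (νs i) (idx i)) * t νs

/-- The tensor is Lorentz covariant (invariant under `SO⁺(1,3)`) and parity invariant. -/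
def IsInvariant {n : ℕ} (t : MinkTensor n) : Prop :=
  (∀ Λ, IsProperOrtho Λ → actT Λ t = t) ∧ actT parityMat t = t

/-- The tensor is traceless: every `η`-contraction of two of its indices vanishes. -/
def Traceless {n : ℕ} (t : MinkTensor n) : Prop :=
  ∀ i j : Fin n, i ≠ j → ∀ idx : Fin n → Fin 4,
    ∑ c : Fin 4, η c c * t (Function.update (Function.update idx i c) j c) = 0

/-- A splitting of the `n` index positions into `k` (ordered) pairs and `n - 2k` remaining
positions; this encodes a partition `{I₀, I₁, ..., I_k}` with `|I₁| = ⋯ = |I_k| = 2`. -/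
abbrev PairSplit (n k : ℕ) : Type := (Fin k ⊕ (Fin k ⊕ Fin (n - 2 * k))) ≃ Fin n

/-- `η_{I₁}···η_{I_k} s_{I₀}` : place `η`-factors at the pairs of the splitting and the
tensor `s` at the remaining positions. -/
def place {n : ℕ} (k : ℕ) (e : PairSplit n k) (s : MinkTensor (n - 2 * k)) :
    MinkTensor n :=
  fun idx =>
    (∏ i : Fin k, η (idx (e (Sum.inl i))) (idx (e (Sum.inr (Sum.inl i))))) *
      s fun j => idx (e (Sum.inr (Sum.inr j)))

/-- The iterated `η`-trace of `t` over the pairs of positions of the splitting. -/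
def ctr {n : ℕ} (k : ℕ) (e : PairSplit n k) (t : MinkTensor n) :
    MinkTensor (n - 2 * k) :=
  fun idx => ∑ c : Fin k → Fin 4,
    (∏ i, η (c i) (c i)) *
      t fun pos =>
        match e.symm pos with
        | Sum.inl i => c i
        | Sum.inr (Sum.inl i) => c i
        | Sum.inr (Sum.inr j) => idx j

/-- The `η`-pairing `⟨t, s⟩ = η^{μ₁ν₁}···η^{μ_nν_n} t_{μ₁...μ_n} s_{ν₁...ν_n}`. -/
def pairing {n : ℕ} (t s : MinkTensor n) : ℝ :=
  ∑ μs : Fin n → Fin 4, ∑ νs : Fin n → Fin 4,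
    (∏ i, η (μs i) (νs i)) * t μs * s νs

/-- The trace stratum `T^n_k`: the span of the tensors `η_{I₁}···η_{I_k} s_{I₀}` with `s`
traceless. -/
def stratum (n k : ℕ) : Submodule ℝ (MinkTensor n) :=
  Submodule.span ℝ
    {t | ∃ (e : PairSplit n k) (s : MinkTensor (n - 2 * k)), Traceless s ∧ t = place k e s}

end MinkTensors

/-!
Moving the factors `η` of a generator of `T^n_k` across the pairing turns
`⟨η_{I₁}⋯η_{I_k} a, s⟩` into the pairing of `a` with the trace of `s` over the `k` pairs `I_j`.
For `s = η_{J₁}⋯η_{J_l} b` with `b` traceless and `l < k` this trace vanishes; take the traces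
one pair `{p, q}` at a time. If `p` and `q` are free indices of `b`, the trace is zero. If
`{p, q}` is one of the `J_j`, it removes that factor `η`, with a factor `4`. If `q` lies in some
`J_j = {p', q}` but `p` does not, the sum over the common value of the indices at `p` and `q`
collapses `η_{J_j}`, and the index at `p'` takes the place of the one at `p`. The last two cases
use up one pair `J_j` each, so as `k > l` the first case must eventually occur.
-/

namespace MinkTensors

open Function Sum

lemma η_symm (μ ν : Fin 4) : η μ ν = η ν μ := by
  unfold η
  split_ifs <;> simp_all

lemma η_self_mul (c x : Fin 4) : η c c * η c x = if c = x then 1 else 0 := by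
  fin_cases c <;> fin_cases x <;> norm_num [η]

lemma sum_η_self_mul_η (x : Fin 4) (F : Fin 4 → ℝ) : ∑ c, η c c * η c x * F c = F x := by
  simp [η_self_mul]

lemma sum_η_self_mul_self : ∑ c : Fin 4, η c c * η c c = 4 := by
  simp [η_self_mul]

lemma sum_prod_η_self_mul_η {A : Type} [Fintype A] [DecidableEq A] (x : A → Fin 4)
    (G : (A → Fin 4) → ℝ) : ∑ y : A → Fin 4, (∏ a, η (y a) (y a) * η (y a) (x a)) * G y = G x := by
  simp [η_self_mul, Fintype.prod_boole, ← funext_iff]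

-- `PairSplit` over arbitrary index types, so that pairs can be removed one at a time.
abbrev Split (A B ι : Type) : Type := (A ⊕ (A ⊕ B)) ≃ ι

variable {ι A B A' B' : Type}

def etaPlace [Fintype A] (f : Split A B ι) (b : (B → Fin 4) → ℝ) : (ι → Fin 4) → ℝ :=
  fun μ => (∏ a, η (μ (f (inl a))) (μ (f (inr (inl a))))) * b fun j => μ (f (inr (inr j)))

def Split.fill (e : Split A B ι) (c : A → Fin 4) (z : B → Fin 4) : ι → Fin 4 :=
  Sum.elim c (Sum.elim c z) ∘ e.symm

@[simp] lemma Split.fill_apply (e : Split A B ι) (c : A → Fin 4) (z : B → Fin 4)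
    (w : A ⊕ (A ⊕ B)) : e.fill c z (e w) = Sum.elim c (Sum.elim c z) w := by
  simp [Split.fill]

def etaTrace [Fintype A] [DecidableEq A] (e : Split A B ι) (t : (ι → Fin 4) → ℝ) :
    (B → Fin 4) → ℝ :=
  fun z => ∑ c : A → Fin 4, (∏ a, η (c a) (c a)) * t (e.fill c z)

lemma etaTrace_smul [Fintype A] [DecidableEq A] (e : Split A B ι) (r : ℝ)
    (t : (ι → Fin 4) → ℝ) : etaTrace e (r • t) = r • etaTrace e t := by
  funext z
  simp only [etaTrace, Pi.smul_apply, smul_eq_mul, Finset.mul_sum]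
  exact Finset.sum_congr rfl fun _ _ => mul_left_comm _ _ _

def Split.swapPair [DecidableEq A] [DecidableEq B] (e : Split A B ι) (a₀ : A) : Split A B ι :=
  (Equiv.swap (inl a₀) (inr (inl a₀))).trans e

lemma Split.fill_swapPair [DecidableEq A] [DecidableEq B] (e : Split A B ι) (a₀ : A)
    (c : A → Fin 4) (z : B → Fin 4) : (e.swapPair a₀).fill c z = e.fill c z := by
  funext i
  obtain ⟨w, rfl⟩ := e.surjective i
  simp only [Split.fill, Split.swapPair, Equiv.symm_trans_apply, comp_apply,
    Equiv.symm_apply_apply, Equiv.symm_swap]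
  rcases w with a | a | j <;> simp only [Equiv.swap_apply_def] <;> split_ifs <;> simp_all

lemma etaTrace_swapPair [Fintype A] [DecidableEq A] [DecidableEq B] (e : Split A B ι) (a₀ : A)
    (t : (ι → Fin 4) → ℝ) : etaTrace (e.swapPair a₀) t = etaTrace e t := by
  funext z
  rw [etaTrace, etaTrace]
  simp_rw [Split.fill_swapPair]

lemma etaPlace_swapPair [Fintype A] [DecidableEq A] [DecidableEq B] (f : Split A B ι) (a₀ : A)
    (b : (B → Fin 4) → ℝ) : etaPlace (f.swapPair a₀) b = etaPlace f b := by
  funext μ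
  simp only [etaPlace, Split.swapPair, Equiv.trans_apply]
  congr 1
  · refine Finset.prod_congr rfl fun a _ => ?_
    rcases eq_or_ne a a₀ with rfl | h
    · simp [η_symm]
    · rw [Equiv.swap_apply_of_ne_of_ne (by simp [h]) (by simp),
        Equiv.swap_apply_of_ne_of_ne (by simp) (by simp [h])]

def sumSubtypeNeEquiv (a₀ : A) :
    ({a // a ≠ a₀} ⊕ ({a // a ≠ a₀} ⊕ B)) ≃
      {w : A ⊕ (A ⊕ B) // w ≠ inl a₀ ∧ w ≠ inr (inl a₀)} where
  toFun
    | inl a => ⟨inl a, by simp [a.prop]⟩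
    | inr (inl a) => ⟨inr (inl a), by simp [a.prop]⟩
    | inr (inr j) => ⟨inr (inr j), by simp⟩
  invFun
    | ⟨inl a, h⟩ => inl ⟨a, fun ha => h.1 (ha ▸ rfl)⟩
    | ⟨inr (inl a), h⟩ => inr (inl ⟨a, fun ha => h.2 (ha ▸ rfl)⟩)
    | ⟨inr (inr j), _⟩ => inr (inr j)
  left_inv w := by rcases w with a | a | j <;> rfl
  right_inv w := by rcases w with ⟨a | a | j, h⟩ <;> rfl

lemma coe_sumSubtypeNeEquiv (a₀ : A) (w : {a // a ≠ a₀} ⊕ ({a // a ≠ a₀} ⊕ B)) :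
    (sumSubtypeNeEquiv a₀ w : A ⊕ (A ⊕ B)) = Sum.map Subtype.val (Sum.map Subtype.val id) w := by
  rcases w with a | a | j <;> rfl

-- `p` and `q` are parameters so that the erased splits of `e` and of a relabelled `f` can
-- land in the same type.
def Split.erase [DecidableEq A] (e : Split A B ι) (a₀ : A) {p q : ι} (hp : e (inl a₀) = p)
    (hq : e (inr (inl a₀)) = q) : Split {a // a ≠ a₀} B {i // i ≠ p ∧ i ≠ q} :=
  (sumSubtypeNeEquiv a₀).trans <| e.subtypeEquiv fun w => by simp [← hp, ← hq]

lemma Split.coe_erase [DecidableEq A] (e : Split A B ι) (a₀ : A) {p q : ι}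
    (hp : e (inl a₀) = p) (hq : e (inr (inl a₀)) = q)
    (w : {a // a ≠ a₀} ⊕ ({a // a ≠ a₀} ⊕ B)) :
    (e.erase a₀ hp hq w : ι) = e (Sum.map Subtype.val (Sum.map Subtype.val id) w) := by
  simp [Split.erase, Equiv.subtypeEquiv_apply, coe_sumSubtypeNeEquiv]

def extendAt [DecidableEq ι] (p q : ι) (ν : {i // i ≠ p ∧ i ≠ q} → Fin 4) (c : Fin 4) :
    ι → Fin 4 :=
  fun i => if h : i ≠ p ∧ i ≠ q then ν ⟨i, h⟩ else c

section extendAt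

variable [DecidableEq ι] {p q : ι} (ν : {i // i ≠ p ∧ i ≠ q} → Fin 4) (c : Fin 4)

@[simp] lemma extendAt_coe (j : {i // i ≠ p ∧ i ≠ q}) : extendAt p q ν c j = ν j := by
  simp [extendAt, j.prop]

@[simp] lemma extendAt_left : extendAt p q ν c p = c := by simp [extendAt]

@[simp] lemma extendAt_right : extendAt p q ν c q = c := by simp [extendAt]

end extendAt

def contractPair [DecidableEq ι] (p q : ι) (t : (ι → Fin 4) → ℝ) :
    ({i // i ≠ p ∧ i ≠ q} → Fin 4) → ℝ :=
  fun ν => ∑ c, η c c * t (extendAt p q ν c)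

lemma Split.fill_funSplitAt_symm [DecidableEq ι] [DecidableEq A] (e : Split A B ι) (a₀ : A)
    (c₀ : Fin 4) (g : {a // a ≠ a₀} → Fin 4) (z : B → Fin 4) :
    e.fill ((Equiv.funSplitAt a₀ (Fin 4)).symm (c₀, g)) z =
      extendAt _ _ ((e.erase a₀ rfl rfl).fill g z) c₀ := by
  funext i
  obtain ⟨w, rfl⟩ := e.surjective i
  have hcoe : ∀ w', e (Sum.map Subtype.val (Sum.map Subtype.val id) w') =
      (e.erase a₀ rfl rfl w' : ι) := fun w' => (e.coe_erase a₀ rfl rfl w').symm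
  rcases w with a | a | j
  · rcases eq_or_ne a a₀ with rfl | h
    · simp
    · rw [Split.fill_apply, show e (inl a) = _ from hcoe (inl ⟨a, h⟩), extendAt_coe,
        Split.fill_apply]
      simp [h]
  · rcases eq_or_ne a a₀ with rfl | h
    · simp
    · rw [Split.fill_apply, show e (inr (inl a)) = _ from hcoe (inr (inl ⟨a, h⟩)),
        extendAt_coe, Split.fill_apply]
      simp [h]
  · rw [Split.fill_apply, show e (inr (inr j)) = _ from hcoe (inr (inr j)), extendAt_coe,
      Split.fill_apply]
    simp

lemma etaTrace_eq_etaTrace_contractPair [DecidableEq ι] [Fintype A] [DecidableEq A]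
    (e : Split A B ι) (a₀ : A) (t : (ι → Fin 4) → ℝ) :
    etaTrace e t =
      etaTrace (e.erase a₀ rfl rfl) (contractPair (e (inl a₀)) (e (inr (inl a₀))) t) := by
  funext z
  simp only [etaTrace, contractPair, Finset.mul_sum]
  rw [← (Equiv.funSplitAt a₀ (Fin 4)).symm.sum_comp, Fintype.sum_prod_type, Finset.sum_comm]
  refine Finset.sum_congr rfl fun g _ => Finset.sum_congr rfl fun c₀ _ => ?_
  rw [Fintype.prod_eq_mul_prod_subtype_ne _ a₀, Split.fill_funSplitAt_symm]
  have hne (a : {a // a ≠ a₀}) : (a : A) ≠ a₀ := a.prop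
  simp [Equiv.funSplitAt, hne]
  ring

lemma extendAt_swap_coe [DecidableEq ι] {p q : ι} (ν : {i // i ≠ p ∧ i ≠ q} → Fin 4)
    (c : Fin 4) (j₀ j : {i // i ≠ p ∧ i ≠ q}) :
    extendAt p q ν c (Equiv.swap p j₀ j) = update ν j₀ c j := by
  rcases eq_or_ne j j₀ with rfl | h
  · simp
  · rw [Equiv.swap_apply_of_ne_of_ne j.prop.1 (Subtype.coe_injective.ne h), extendAt_coe,
      update_of_ne h]

lemma etaPlace_eq_η_mul_etaPlace [Fintype A'] [DecidableEq A'] {κ : Type} (f : Split A' B' ι)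
    (α₀ : A') (f' : Split {α // α ≠ α₀} B' κ) (b : (B' → Fin 4) → ℝ) (μ : ι → Fin 4)
    (ν : κ → Fin 4) (h : ∀ w, μ (f (Sum.map Subtype.val (Sum.map Subtype.val id) w)) = ν (f' w)) :
    etaPlace f b μ = η (μ (f (inl α₀))) (μ (f (inr (inl α₀)))) * etaPlace f' b ν := by
  have h₁ (α : {α // α ≠ α₀}) := h (inl α)
  have h₂ (α : {α // α ≠ α₀}) := h (inr (inl α))
  have h₃ (β : B') := h (inr (inr β))
  simp only [Sum.map_inl, Sum.map_inr, id] at h₁ h₂ h₃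
  simp only [etaPlace, Fintype.prod_eq_mul_prod_subtype_ne _ α₀, h₁, h₂, h₃, mul_assoc]

lemma exists_contractPair_etaPlace_eq_four_smul [DecidableEq ι] [Fintype A'] [DecidableEq A']
    (f : Split A' B' ι) (b : (B' → Fin 4) → ℝ) (α₀ : A') {p q : ι} (hp : f (inl α₀) = p)
    (hq : f (inr (inl α₀)) = q) :
    ∃ f' : Split {α // α ≠ α₀} B' {i // i ≠ p ∧ i ≠ q},
      contractPair p q (etaPlace f b) = (4 : ℝ) • etaPlace f' b := by
  refine ⟨f.erase α₀ hp hq, funext fun ν => ?_⟩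
  have key (c : Fin 4) :
      etaPlace f b (extendAt p q ν c) = η c c * etaPlace (f.erase α₀ hp hq) b ν := by
    rw [etaPlace_eq_η_mul_etaPlace f α₀ _ b _ ν fun w => by
      rw [← Split.coe_erase f α₀ hp hq, extendAt_coe], hp, hq, extendAt_left, extendAt_right]
  simp only [contractPair, key, ← mul_assoc, ← Finset.sum_mul, sum_η_self_mul_self,
    Pi.smul_apply, smul_eq_mul]

lemma exists_contractPair_etaPlace_eq_etaPlace [DecidableEq ι] [Fintype A'] [DecidableEq A']
    (f : Split A' B' ι) (b : (B' → Fin 4) → ℝ) (α₀ : A') {p q : ι} (hp : f (inl α₀) ≠ p)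
    (hq : f (inr (inl α₀)) = q) (hpq : p ≠ q) :
    ∃ f' : Split {α // α ≠ α₀} B' {i // i ≠ p ∧ i ≠ q},
      contractPair p q (etaPlace f b) = etaPlace f' b := by
  have hp'q : f (inl α₀) ≠ q := hq ▸ f.injective.ne (by simp)
  set j₀ : {i // i ≠ p ∧ i ≠ q} := ⟨f (inl α₀), hp, hp'q⟩
  -- the trace moves the partner `f (inl α₀)` of `q` into the place of `p`
  set σ := Equiv.swap p (f (inl α₀))
  have hσp : (f.trans σ : Split A' B' ι) (inl α₀) = p := Equiv.swap_apply_right _ _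
  have hσq : (f.trans σ : Split A' B' ι) (inr (inl α₀)) = q := by
    rw [Equiv.trans_apply, hq, Equiv.swap_apply_of_ne_of_ne hpq.symm hp'q.symm]
  set f' := Split.erase (f.trans σ) α₀ hσp hσq
  refine ⟨f', funext fun ν => ?_⟩
  have key (c : Fin 4) :
      etaPlace f b (extendAt p q ν c) = η (ν j₀) c * etaPlace f' b (update ν j₀ c) := by
    refine (etaPlace_eq_η_mul_etaPlace f α₀ f' b _ (update ν j₀ c) fun w => ?_).trans ?_
    · rw [← extendAt_swap_coe, Split.coe_erase, Equiv.trans_apply, Equiv.swap_apply_self]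
    · rw [hq, extendAt_right, ← extendAt_coe ν c j₀]
  simp only [contractPair, key, η_symm (ν j₀), ← mul_assoc, sum_η_self_mul_η, update_eq_self]

lemma contractPair_etaPlace_eq_zero [DecidableEq ι] [Fintype A'] {m : ℕ} (f : Split A' (Fin m) ι)
    {b : MinkTensor m} (hb : Traceless b) {β₁ β₂ : Fin m} {p q : ι}
    (hp : f (inr (inr β₁)) = p) (hq : f (inr (inr β₂)) = q) (hpq : p ≠ q) :
    contractPair p q (etaPlace f b) = 0 := by
  have hβ : β₁ ≠ β₂ := by
    rintro rfl
    exact hpq (hp.symm.trans hq)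
  funext ν
  have hfree (c : Fin 4) {w} (h₁ : w ≠ inr (inr β₁)) (h₂ : w ≠ inr (inr β₂)) :
      extendAt p q ν c (f w) = extendAt p q ν 0 (f w) := by
    have h : f w ≠ p ∧ f w ≠ q := by
      rw [← hp, ← hq]
      exact ⟨f.injective.ne h₁, f.injective.ne h₂⟩
    exact (extendAt_coe ν c ⟨f w, h⟩).trans (extendAt_coe ν 0 ⟨f w, h⟩).symm
  set μ₀ := extendAt p q ν 0
  have hplace (c : Fin 4) : etaPlace f b (extendAt p q ν c) =
      (∏ a, η (μ₀ (f (inl a))) (μ₀ (f (inr (inl a))))) *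
        b (update (update (fun β => μ₀ (f (inr (inr β)))) β₁ c) β₂ c) := by
    simp only [etaPlace]
    congr 1
    · exact Finset.prod_congr rfl fun a _ => by rw [hfree c (by simp) (by simp),
        hfree c (w := inr (inl a)) (by simp) (by simp)]
    · congr 1
      funext β
      rcases eq_or_ne β β₂ with rfl | h₂
      · simp [hq]
      rcases eq_or_ne β β₁ with rfl | h₁
      · simp [hp, h₂]
      rw [update_of_ne h₂, update_of_ne h₁, hfree c (by simpa using h₁) (by simpa using h₂)]
  simp only [contractPair, hplace, mul_left_comm _ (∏ _, _), ← Finset.mul_sum, hb β₁ β₂ hβ,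
    mul_zero, Pi.zero_apply]

lemma exists_etaTrace_etaPlace_eq_smul [DecidableEq ι] [Fintype A] [DecidableEq A] [Fintype A']
    [DecidableEq A'] [DecidableEq B'] (e : Split A B ι) (f : Split A' B' ι)
    (b : (B' → Fin 4) → ℝ) (a₀ : A) (α₀ : A')
    (h : e (inr (inl a₀)) = f (inl α₀) ∨ e (inr (inl a₀)) = f (inr (inl α₀))) :
    ∃ (r : ℝ) (f' : Split {α // α ≠ α₀} B' {i // i ≠ e (inl a₀) ∧ i ≠ e (inr (inl a₀))}),
      etaTrace e (etaPlace f b) = r • etaTrace (e.erase a₀ rfl rfl) (etaPlace f' b) := by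
  wlog hq : f (inr (inl α₀)) = e (inr (inl a₀)) generalizing f
  · have hq' : f (inl α₀) = e (inr (inl a₀)) := (h.resolve_right (Ne.symm hq)).symm
    rw [← etaPlace_swapPair f α₀]
    exact this _ (.inr (by simpa [Split.swapPair] using hq'.symm))
      (by simpa [Split.swapPair] using hq')
  rw [etaTrace_eq_etaTrace_contractPair e a₀]
  by_cases hp : f (inl α₀) = e (inl a₀)
  · obtain ⟨f', hf'⟩ := exists_contractPair_etaPlace_eq_four_smul f b α₀ hp hq
    exact ⟨4, f', by rw [hf', etaTrace_smul]⟩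
  · obtain ⟨f', hf'⟩ := exists_contractPair_etaPlace_eq_etaPlace f b α₀ hp hq (by simp)
    exact ⟨1, f', by rw [hf', one_smul]⟩

lemma Split.exists_pair_or_exists_free (f : Split A B ι) (i : ι) :
    (∃ a, i = f (inl a) ∨ i = f (inr (inl a))) ∨ ∃ j, i = f (inr (inr j)) := by
  obtain ⟨w, rfl⟩ := f.surjective i
  rcases w with a | a | j
  exacts [.inl ⟨a, .inl rfl⟩, .inl ⟨a, .inr rfl⟩, .inr ⟨j, rfl⟩]

theorem etaTrace_etaPlace_eq_zero [DecidableEq ι] [Fintype A] [DecidableEq A] [DecidableEq B]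
    [Fintype A'] [DecidableEq A'] {m : ℕ} (e : Split A B ι) (f : Split A' (Fin m) ι)
    {b : MinkTensor m} (hb : Traceless b) (hcard : Fintype.card A' < Fintype.card A) :
    etaTrace e (etaPlace f b) = 0 := by
  induction hN : Fintype.card A' using Nat.strong_induction_on generalizing ι A A' with
  | _ N ih =>
    obtain ⟨a₀⟩ : Nonempty A := Fintype.card_pos_iff.mp (by omega)
    have step (e' : Split A B ι) (α₀ : A')
        (h : e' (inr (inl a₀)) = f (inl α₀) ∨ e' (inr (inl a₀)) = f (inr (inl α₀))) :
        etaTrace e' (etaPlace f b) = 0 := by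
      obtain ⟨r, f', hr⟩ := exists_etaTrace_etaPlace_eq_smul e' f b a₀ α₀ h
      have hlt : Fintype.card {α // α ≠ α₀} < N :=
        hN ▸ Fintype.card_subtype_lt (x := α₀) (by simp)
      rw [hr, ih _ hlt _ f' (by simp [Fintype.card_subtype_compl]; omega) rfl, smul_zero]
    rcases f.exists_pair_or_exists_free (e (inr (inl a₀))) with ⟨α₀, hα₀⟩ | ⟨β₂, hβ₂⟩
    · exact step e α₀ hα₀
    rcases f.exists_pair_or_exists_free (e (inl a₀)) with ⟨α₀, hα₀⟩ | ⟨β₁, hβ₁⟩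
    · rw [← etaTrace_swapPair e a₀]
      exact step _ α₀ (by simpa [Split.swapPair] using hα₀)
    · rw [etaTrace_eq_etaTrace_contractPair e a₀,
        contractPair_etaPlace_eq_zero f hb hβ₁.symm hβ₂.symm (by simp)]
      funext z
      simp [etaTrace]

lemma pairing_eq_sum {n : ℕ} (t s : MinkTensor n) :
    pairing t s = ∑ μ : Fin n → Fin 4, (∏ i, η (μ i) (μ i)) * t μ * s μ := by
  refine Finset.sum_congr rfl fun μ _ => Finset.sum_eq_single μ (fun ν _ hν => ?_) (by simp)
  obtain ⟨i, hi⟩ := Function.ne_iff.mp hν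
  rw [Finset.prod_eq_zero (Finset.mem_univ i) (by simp [η, Ne.symm hi]), zero_mul, zero_mul]

lemma pairing_comm {n : ℕ} (t s : MinkTensor n) : pairing t s = pairing s t := by
  simp only [pairing_eq_sum, mul_right_comm _ (t _)]

def pairingBilin (n : ℕ) : LinearMap.BilinForm ℝ (MinkTensor n) :=
  LinearMap.mk₂ ℝ pairing
    (fun _ _ _ => by
      simp only [pairing_eq_sum, Pi.add_apply, ← Finset.sum_add_distrib]
      exact Finset.sum_congr rfl fun _ _ => by ring)
    (fun _ _ _ => by
      simp only [pairing_eq_sum, Pi.smul_apply, smul_eq_mul, Finset.mul_sum]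
      exact Finset.sum_congr rfl fun _ _ => by ring)
    (fun _ _ _ => by
      simp only [pairing_eq_sum, Pi.add_apply, ← Finset.sum_add_distrib]
      exact Finset.sum_congr rfl fun _ _ => by ring)
    (fun _ _ _ => by
      simp only [pairing_eq_sum, Pi.smul_apply, smul_eq_mul, Finset.mul_sum]
      exact Finset.sum_congr rfl fun _ _ => by ring)

lemma pairing_etaPlace [Fintype A] [DecidableEq A] [Fintype B] [DecidableEq B] {n : ℕ}
    (e : Split A B (Fin n)) (a : (B → Fin 4) → ℝ) (s : MinkTensor n) :
    pairing (etaPlace e a) s = ∑ z, (∏ j, η (z j) (z j)) * a z * etaTrace e s z := by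
  let Φ : (B → Fin 4) × ((A → Fin 4) × (A → Fin 4)) ≃ (Fin n → Fin 4) :=
    (Equiv.prodComm _ _).trans <| (Equiv.prodAssoc _ _ _).trans <|
      ((Equiv.prodCongr (Equiv.refl _) (Equiv.sumArrowEquivProdArrow _ _ _).symm).trans
        (Equiv.sumArrowEquivProdArrow _ _ _).symm).trans (e.arrowCongr (Equiv.refl _))
  have hΦ (z : B → Fin 4) (x y : A → Fin 4) :
      Φ (z, x, y) = Sum.elim x (Sum.elim y z) ∘ e.symm := rfl
  have hw (z : B → Fin 4) (x y : A → Fin 4) : ∏ i, η (Φ (z, x, y) i) (Φ (z, x, y) i) =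
      (∏ a, η (x a) (x a)) * (∏ a, η (y a) (y a)) * ∏ j, η (z j) (z j) := by
    rw [hΦ, ← e.prod_comp]
    simp [Fintype.prod_sum_type, mul_assoc]
  have hplace (z : B → Fin 4) (x y : A → Fin 4) :
      etaPlace e a (Φ (z, x, y)) = (∏ α, η (y α) (x α)) * a z := by
    simp [etaPlace, hΦ, η_symm]
  rw [pairing_eq_sum, ← Φ.sum_comp]
  simp only [Fintype.sum_prod_type, hw, hplace]
  refine Finset.sum_congr rfl fun z _ => ?_
  rw [etaTrace, Finset.mul_sum]
  refine Finset.sum_congr rfl fun x _ => ?_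
  rw [show e.fill x z = Φ (z, x, x) from rfl, ← sum_prod_η_self_mul_η x fun y => s (Φ (z, x, y)),
    Finset.mul_sum, Finset.mul_sum]
  refine Finset.sum_congr rfl fun y _ => ?_
  rw [Finset.prod_mul_distrib]
  ring

lemma pairing_place_place_eq_zero {n k l : ℕ} (hlk : l < k) (e : PairSplit n k)
    (f : PairSplit n l) (a : MinkTensor (n - 2 * k)) {b : MinkTensor (n - 2 * l)}
    (hb : Traceless b) : pairing (place k e a) (place l f b) = 0 := by
  have h : etaTrace e (etaPlace f b) = 0 := etaTrace_etaPlace_eq_zero e f hb (by simpa)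
  rw [show place k e a = etaPlace e a from rfl, show place l f b = etaPlace f b from rfl,
    pairing_etaPlace, h]
  simp

lemma pairing_eq_zero_of_mem_stratum {n k l : ℕ} (hlk : l < k) {t s : MinkTensor n}
    (ht : t ∈ stratum n k) (hs : s ∈ stratum n l) : pairing t s = 0 := by
  have hgen : ∀ x ∈ {t | ∃ e a, Traceless a ∧ t = place k e a}, pairingBilin n x s = 0 := by
    rintro _ ⟨e, a, -, rfl⟩
    refine LinearMap.eqOn_span (g := 0) ?_ hs
    rintro _ ⟨f, b, hb, rfl⟩
    exact pairing_place_place_eq_zero hlk e f a hb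
  exact LinearMap.eqOn_span (f := (pairingBilin n).flip s) (g := 0) hgen ht

end MinkTensors

open MinkTensors in
theorem strata_orthogonal_general {n k l : ℕ}
    (hkl : k ≠ l)
    (t s : MinkTensor n) (ht : t ∈ stratum n k) (hs : s ∈ stratum n l) :
    pairing t s = 0 := by
  rcases hkl.lt_or_gt with h | h
  · rw [pairing_comm]
    exact pairing_eq_zero_of_mem_stratum h hs ht
  · exact pairing_eq_zero_of_mem_stratum h ht hs

open MinkTensors in
theorem strata_orthogonal {n k l : ℕ}
    (hk : 2 * k ≤ n) (hl : 2 * l ≤ n) (hkl : k ≠ l)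
    (t s : MinkTensor n) (ht : t ∈ stratum n k) (hs : s ∈ stratum n l) :
    pairing t s = 0 :=
  strata_orthogonal_general hkl t s ht hs
end
end

section
/- Nondegeneracy on each trace stratum: for each k with 0 ≤ 2k ≤ n, the restriction of the η-pairing ⟨·,·⟩ to the subspace T^n_k of rank-n Minkowski tensors is nondegenerate: if t ∈ T^n_k satisfies ⟨t, s⟩ = 0 for all s ∈ T^n_k, then t = 0. -/
noncomputable section

open scoped BigOperators

/-!
Multiplying each component `t_{μ₁…μ_n}` by the sign `η^{μ₁μ₁}···η^{μ_nμ_n}` maps `T^n_k` into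
itself: it keeps traceless tensors traceless, and on a factor `η_{ab}` the two signs cancel because
`η_{ab} = 0` unless `a = b`. Pairing `t` with its sign-flipped copy gives `∑ t_μ²`, so a `t ∈ T^n_k`
orthogonal to `T^n_k` vanishes.
-/

namespace MinkTensors

lemma η_diag_mul_self (a : Fin 4) : η a a * η a a = 1 := by
  rw [η, if_pos rfl]; split_ifs <;> norm_num

lemma η_diag_mul_η_diag_mul_η (a b : Fin 4) : η a a * η b b * η a b = η a b := by
  by_cases h : a = b
  · subst h; rw [η_diag_mul_self, one_mul]
  · simp [η, h]

def signProd {ι : Type*} [Fintype ι] (μs : ι → Fin 4) : ℝ := ∏ i, η (μs i) (μs i)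

lemma signProd_mul_self {ι : Type*} [Fintype ι] (μs : ι → Fin 4) :
    signProd μs * signProd μs = 1 := by
  rw [signProd, ← Finset.prod_mul_distrib]
  exact Finset.prod_eq_one fun i _ => η_diag_mul_self _

lemma signProd_comp_equiv {ι κ : Type*} [Fintype ι] [Fintype κ] (e : κ ≃ ι) (μs : ι → Fin 4) :
    signProd (μs ∘ e) = signProd μs :=
  Equiv.prod_comp e fun i => η (μs i) (μs i)

lemma signProd_sum {ι κ : Type*} [Fintype ι] [Fintype κ] (μs : ι ⊕ κ → Fin 4) :
    signProd μs = signProd (μs ∘ Sum.inl) * signProd (μs ∘ Sum.inr) :=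
  Fintype.prod_sum_type _

lemma signProd_update {ι : Type*} [Fintype ι] [DecidableEq ι] (μs : ι → Fin 4) (i : ι)
    (c : Fin 4) : signProd (Function.update μs i c) = η c c * η (μs i) (μs i) * signProd μs := by
  have hrest : ∏ p ∈ Finset.univ.erase i,
      η (Function.update μs i c p) (Function.update μs i c p) =
      ∏ p ∈ Finset.univ.erase i, η (μs p) (μs p) :=
    Finset.prod_congr rfl fun p hp => by rw [Function.update_of_ne (Finset.ne_of_mem_erase hp)]
  unfold signProd
  rw [← Finset.mul_prod_erase _ _ (Finset.mem_univ i),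
    ← Finset.mul_prod_erase _ (fun p => η (μs p) (μs p)) (Finset.mem_univ i), hrest,
    Function.update_self]
  linear_combination -(η c c * ∏ p ∈ Finset.univ.erase i, η (μs p) (μs p)) *
    η_diag_mul_self (μs i)

def euclid (n : ℕ) : MinkTensor n →ₗ[ℝ] MinkTensor n where
  toFun t μs := signProd μs * t μs
  map_add' _ _ := funext fun _ => mul_add _ _ _
  map_smul' _ _ := funext fun _ => mul_left_comm _ _ _

lemma euclid_apply {n : ℕ} (t : MinkTensor n) (μs : Fin n → Fin 4) :
    euclid n t μs = signProd μs * t μs := rfl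

lemma pairing_euclid_self {n : ℕ} (t : MinkTensor n) :
    pairing t (euclid n t) = ∑ μs, t μs ^ 2 := by
  refine Finset.sum_congr rfl fun μs _ => ?_
  rw [Fintype.sum_eq_single μs]
  · rw [euclid_apply, ← signProd]
    linear_combination t μs ^ 2 * signProd_mul_self μs
  · intro νs hne
    obtain ⟨i, hi⟩ := Function.ne_iff.mp hne
    rw [Finset.prod_eq_zero (Finset.mem_univ i) (by simp [η, Ne.symm hi]), zero_mul, zero_mul]

lemma Traceless.euclid {n : ℕ} {s : MinkTensor n} (hs : Traceless s) :
    Traceless (euclid n s) := by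
  intro i j hij idx
  -- Both updated slots carry the same index `c`, so the sign does not depend on `c`.
  have hsign : ∀ c : Fin 4, signProd (Function.update (Function.update idx i c) j c) =
      η (idx j) (idx j) * η (idx i) (idx i) * signProd idx := fun c => by
    rw [signProd_update, Function.update_of_ne hij.symm, signProd_update]
    linear_combination (η (idx j) (idx j) * η (idx i) (idx i) * signProd idx) *
      η_diag_mul_self c
  simp only [euclid_apply, hsign, mul_left_comm (η _ _ : ℝ), ← Finset.mul_sum, hs i j hij idx,
    mul_zero]

lemma euclid_place {n k : ℕ} (e : PairSplit n k) (s : MinkTensor (n - 2 * k)) :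
    euclid n (place k e s) = place k e (euclid (n - 2 * k) s) := by
  funext idx
  have hsign : signProd idx = signProd (fun i => idx (e (Sum.inl i))) *
      (signProd (fun i => idx (e (Sum.inr (Sum.inl i)))) *
        signProd (fun j => idx (e (Sum.inr (Sum.inr j))))) := by
    rw [← signProd_comp_equiv e, signProd_sum, signProd_sum]; rfl
  have hpairs : signProd (fun i => idx (e (Sum.inl i))) *
      signProd (fun i => idx (e (Sum.inr (Sum.inl i)))) *
      ∏ i : Fin k, η (idx (e (Sum.inl i))) (idx (e (Sum.inr (Sum.inl i)))) =
      ∏ i : Fin k, η (idx (e (Sum.inl i))) (idx (e (Sum.inr (Sum.inl i)))) := by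
    simp only [signProd, ← Finset.prod_mul_distrib, η_diag_mul_η_diag_mul_η]
  simp only [euclid_apply, place, hsign]
  linear_combination (signProd (fun j => idx (e (Sum.inr (Sum.inr j)))) *
    s fun j => idx (e (Sum.inr (Sum.inr j)))) * hpairs

lemma euclid_mem_stratum {n k : ℕ} {t : MinkTensor n} (ht : t ∈ stratum n k) :
    euclid n t ∈ stratum n k := by
  suffices stratum n k ≤ (stratum n k).comap (euclid n) from this ht
  refine Submodule.span_le.mpr ?_
  rintro _ ⟨e, s, hs, rfl⟩
  rw [SetLike.mem_coe, Submodule.mem_comap, euclid_place]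
  exact Submodule.subset_span ⟨e, _, hs.euclid, rfl⟩

end MinkTensors

open MinkTensors in
theorem strata_pairing_nondegenerate_general {n k : ℕ}
    (t : MinkTensor n) (ht : t ∈ stratum n k)
    (h : ∀ s ∈ stratum n k, pairing t s = 0) :
    t = 0 := by
  have hsq : ∑ μs, t μs ^ 2 = 0 := by
    rw [← pairing_euclid_self]; exact h _ (euclid_mem_stratum ht)
  funext μs
  exact pow_eq_zero_iff two_ne_zero |>.mp <|
    (Finset.sum_eq_zero_iff_of_nonneg fun μs _ => sq_nonneg (t μs)).mp hsq μs (Finset.mem_univ _)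

open MinkTensors in
theorem strata_pairing_nondegenerate {n k : ℕ} (hk : 2 * k ≤ n)
    (t : MinkTensor n) (ht : t ∈ stratum n k)
    (h : ∀ s ∈ stratum n k, pairing t s = 0) :
    t = 0 :=
  strata_pairing_nondegenerate_general t ht h
end
end
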